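/- Let E_i(t) = Σ_{j=1}^{m} E_j(t) be the total energy consumed by the m devices of one cluster, where each E_j is the NOMA per-device energy function with common transmission time t and circuit power P^C > 0. Then E_i is convex on (0, ∞), there exists a unique T_i* > 0 at which the derivative of E_i vanishes, and E_i is strictly decreasing on (0, T_i*) and strictly increasing on (T_i*, ∞). -/

import Mathlib

/-!
The energy is the perspective `t ↦ t P(1/t)` of the cluster power
`P(u) = Σ_j (c_j (Σ_l (e^{a_l u} - 1)(e^{a_j u} - 1) e^{b_{jl} u} + e^{a_j u} - 1) + P^C)`.
On `u ≥ 0` each interference term is a product of nonnegative nondecreasing convex functions,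
hence convex, and `e^{a_j u}` is strictly convex, so `P` is strictly convex; perspectives preserve
strict convexity. The energy tends to `∞` as `t → 0⁺` (`P` grows at least quadratically) and as
`t → ∞` (`P ≥ P^C`), so its derivative changes sign and, by Darboux, vanishes at some `T`. The
derivative of a strictly convex function is strictly increasing, so `T` is the only critical point
and the energy decreases before it and increases after it.
-/

open Real Set Filter Topology

section Convexity

variable {ι E : Type*} [AddCommGroup E] [Module ℝ E] {s : Set E}

theorem ConvexOn.fun_sum {t : Finset ι} {f : ι → E → ℝ} (hs : Convex ℝ s)
    (hf : ∀ i ∈ t, ConvexOn ℝ s (f i)) : ConvexOn ℝ s fun x => ∑ i ∈ t, f i x := by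
  induction t using Finset.cons_induction with
  | empty => simpa using convexOn_const (0 : ℝ) hs
  | cons i t hi ih =>
    simp only [Finset.sum_cons]
    rw [Finset.forall_mem_cons] at hf
    exact hf.1.add (ih hf.2)

theorem StrictConvexOn.fun_sum {t : Finset ι} {f : ι → E → ℝ} (ht : t.Nonempty)
    (hf : ∀ i ∈ t, StrictConvexOn ℝ s (f i)) : StrictConvexOn ℝ s fun x => ∑ i ∈ t, f i x := by
  induction ht using Finset.Nonempty.cons_induction with
  | singleton i => simpa using hf i (Finset.mem_singleton_self i)
  | cons i t hi _ ih =>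
    simp only [Finset.sum_cons]
    rw [Finset.forall_mem_cons] at hf
    exact hf.1.add (ih hf.2)

theorem StrictConvexOn.const_mul {f : E → ℝ} {c : ℝ} (hc : 0 < c) (hf : StrictConvexOn ℝ s f) :
    StrictConvexOn ℝ s fun x => c * f x := by
  refine ⟨hf.1, fun x hx y hy hxy a b ha hb hab => ?_⟩
  have := mul_lt_mul_of_pos_left (hf.2 hx hy hxy ha hb hab) hc
  simp only [smul_eq_mul] at this ⊢
  linarith

end Convexity

theorem convexOn_exp_mul (c : ℝ) : ConvexOn ℝ univ fun u => exp (c * u) :=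
  convexOn_exp.comp_linearMap (LinearMap.mul ℝ ℝ c)

theorem strictConvexOn_exp_mul {c : ℝ} (hc : c ≠ 0) :
    StrictConvexOn ℝ univ fun u => exp (c * u) := by
  refine ⟨convex_univ, fun x _ y _ hxy a b ha hb hab => ?_⟩
  have := strictConvexOn_exp.2 (mem_univ (c * x)) (mem_univ (c * y)) (by simpa [hc] using hxy)
    ha hb hab
  simp only [smul_eq_mul] at this ⊢
  convert this using 2
  ring

theorem convexOn_exp_sub_one_mul_exp_sub_one_mul_exp {x y z : ℝ} (hx : 0 ≤ x) (hy : 0 ≤ y)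
    (hz : 0 ≤ z) :
    ConvexOn ℝ (Ici 0) fun u => (exp (x * u) - 1) * (exp (y * u) - 1) * exp (z * u) := by
  have hconv (c : ℝ) : ConvexOn ℝ (Ici 0) fun u => exp (c * u) :=
    (convexOn_exp_mul c).subset (subset_univ _) (convex_Ici 0)
  have hmono {c : ℝ} (hc : 0 ≤ c) : MonotoneOn (fun u => exp (c * u)) (Ici 0) :=
    fun _ _ _ _ h => exp_le_exp.2 (mul_le_mul_of_nonneg_left h hc)
  have hconv' (c : ℝ) : ConvexOn ℝ (Ici 0) fun u => exp (c * u) - 1 :=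
    (hconv c).sub (concaveOn_const 1 (convex_Ici 0))
  have hmono' {c : ℝ} (hc : 0 ≤ c) : MonotoneOn (fun u => exp (c * u) - 1) (Ici 0) :=
    fun _ hu _ hv h => sub_le_sub_right (hmono hc hu hv h) 1
  have hnonneg {c : ℝ} (hc : 0 ≤ c) (u : ℝ) (hu : u ∈ Ici (0 : ℝ)) : 0 ≤ exp (c * u) - 1 :=
    sub_nonneg.2 (one_le_exp (mul_nonneg hc hu))
  have hxy : ConvexOn ℝ (Ici 0) fun u => (exp (x * u) - 1) * (exp (y * u) - 1) :=
    (hconv' x).mul (hconv' y) (hnonneg hx) (hnonneg hy) ((hmono' hx).monovaryOn (hmono' hy))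
  have hxy_mono : MonotoneOn (fun u => (exp (x * u) - 1) * (exp (y * u) - 1)) (Ici 0) :=
    (hmono' hx).mul (hmono' hy) (hnonneg hx) (hnonneg hy)
  exact hxy.mul (hconv z) (fun u hu => mul_nonneg (hnonneg hx u hu) (hnonneg hy u hu))
    (fun u _ => (exp_pos _).le) (hxy_mono.monovaryOn (hmono hz))

section Perspective

variable {f : ℝ → ℝ}

noncomputable def perspective (f : ℝ → ℝ) (t : ℝ) : ℝ := t * f t⁻¹

theorem StrictConvexOn.perspective (hf : StrictConvexOn ℝ (Ioi 0) f) :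
    StrictConvexOn ℝ (Ioi 0) (perspective f) := by
  refine ⟨convex_Ioi 0, fun x hx y hy hxy a b ha hb hab => ?_⟩
  rw [mem_Ioi] at hx hy
  simp only [smul_eq_mul]
  set z := a * x + b * y with hz_def
  have hz : 0 < z := by positivity
  -- `z⁻¹` is the convex combination of `x⁻¹` and `y⁻¹` with weights `a x / z` and `b y / z`
  have key := hf.2 (inv_pos.2 hx) (inv_pos.2 hy) (inv_injective.ne hxy)
    (div_pos (mul_pos ha hx) hz) (div_pos (mul_pos hb hy) hz)
    (by rw [← add_div, ← hz_def, div_self hz.ne'])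
  have hcomb : a * x / z * x⁻¹ + b * y / z * y⁻¹ = z⁻¹ := by
    field_simp
    rw [hab]
  simp only [smul_eq_mul, hcomb] at key
  show z * f z⁻¹ < a * (x * f x⁻¹) + b * (y * f y⁻¹)
  calc z * f z⁻¹ < z * (a * x / z * f x⁻¹ + b * y / z * f y⁻¹) := mul_lt_mul_of_pos_left key hz
    _ = a * (x * f x⁻¹) + b * (y * f y⁻¹) := by field_simp

theorem DifferentiableAt.perspective {t : ℝ} (hf : DifferentiableAt ℝ f t⁻¹) (ht : t ≠ 0) :
    DifferentiableAt ℝ (perspective f) t :=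
  differentiableAt_id.mul (hf.comp t (differentiableAt_inv ht))

theorem tendsto_perspective_nhdsGT_zero {K : ℝ} (hK : 0 < K) (hf : ∀ u, 0 < u → K * u ^ 2 ≤ f u) :
    Tendsto (perspective f) (𝓝[>] 0) atTop := by
  refine tendsto_atTop_mono' _ ?_ (tendsto_inv_nhdsGT_zero.const_mul_atTop hK)
  filter_upwards [self_mem_nhdsWithin] with t (ht : 0 < t)
  calc K * t⁻¹ = t * (K * t⁻¹ ^ 2) := by field_simp
    _ ≤ perspective f t := mul_le_mul_of_nonneg_left (hf _ (inv_pos.2 ht)) ht.le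

theorem tendsto_perspective_atTop {P : ℝ} (hP : 0 < P) (hf : ∀ u, 0 < u → P ≤ f u) :
    Tendsto (perspective f) atTop atTop := by
  refine tendsto_atTop_mono' _ ?_ (tendsto_id.const_mul_atTop hP)
  filter_upwards [eventually_gt_atTop 0] with t ht
  calc P * id t = t * P := mul_comm _ _
    _ ≤ perspective f t := mul_le_mul_of_nonneg_left (hf _ (inv_pos.2 ht)) ht.le

end Perspective

section CriticalPoint

variable {S : Set ℝ} {f : ℝ → ℝ} {T : ℝ}

theorem StrictConvexOn.strictAntiOn_of_deriv_eq_zero (hf : StrictConvexOn ℝ S f)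
    (hd : ∀ x ∈ S, DifferentiableAt ℝ f x) (hT : T ∈ S) (hT0 : deriv f T = 0) :
    StrictAntiOn f (S ∩ Iic T) := by
  rintro x ⟨hx, -⟩ y ⟨hy, hyT⟩ hxy
  have hslope : slope f x y < 0 := calc
    slope f x y < deriv f y := hf.slope_lt_deriv hx hy hxy (hd y hy)
    _ ≤ deriv f T := (hf.strictMonoOn_deriv hd).monotoneOn hy hT hyT
    _ = 0 := hT0
  rw [slope_def_field, div_neg_iff] at hslope
  rcases hslope with ⟨-, h⟩ | ⟨h, -⟩ <;> linarith

theorem StrictConvexOn.strictMonoOn_of_deriv_eq_zero (hf : StrictConvexOn ℝ S f)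
    (hd : ∀ x ∈ S, DifferentiableAt ℝ f x) (hT : T ∈ S) (hT0 : deriv f T = 0) :
    StrictMonoOn f (S ∩ Ici T) := by
  rintro x ⟨hx, hTx⟩ y ⟨hy, -⟩ hxy
  have hslope : 0 < slope f x y := calc
    0 = deriv f T := hT0.symm
    _ ≤ deriv f x := (hf.strictMonoOn_deriv hd).monotoneOn hT hx hTx
    _ < slope f x y := hf.deriv_lt_slope hx hy hxy (hd x hx)
  rw [slope_def_field] at hslope
  linarith [(div_pos_iff_of_pos_right (sub_pos.2 hxy)).1 hslope]

variable {a : ℝ}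

-- Darboux: `deriv f` takes a negative value near `a` and a positive value near `∞`.
theorem StrictConvexOn.exists_deriv_eq_zero (hf : StrictConvexOn ℝ (Ioi a) f)
    (hd : ∀ x ∈ Ioi a, DifferentiableAt ℝ f x) (h0 : Tendsto f (𝓝[>] a) atTop)
    (htop : Tendsto f atTop atTop) : ∃ T, a < T ∧ deriv f T = 0 := by
  have hp : a + 1 ∈ Ioi a := lt_add_one a
  obtain ⟨x, hfx, hx, hxp⟩ : ∃ x, f (a + 1) < f x ∧ x ∈ Ioo a (a + 1) :=
    ((h0.eventually_gt_atTop _).and (Ioo_mem_nhdsGT hp)).exists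
  obtain ⟨y, hfy, hpy⟩ : ∃ y, f (a + 1) < f y ∧ a + 1 < y :=
    ((htop.eventually_gt_atTop _).and (eventually_gt_atTop _)).exists
  have hy : y ∈ Ioi a := hp.trans hpy
  have hneg : deriv f x < 0 := (hf.deriv_lt_slope hx hp hxp (hd x hx)).trans <| by
    rw [slope_def_field]; exact div_neg_of_neg_of_pos (by linarith) (by linarith)
  have hpos : 0 < deriv f y := lt_trans (by
    rw [slope_def_field]; exact div_pos (by linarith) (by linarith))
    (hf.slope_lt_deriv hp hy hpy (hd y hy))
  obtain ⟨T, hT, hT0⟩ := (ordConnected_Ioi.image_deriv hd).out (mem_image_of_mem _ hx)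
    (mem_image_of_mem _ hy) ⟨hneg.le, hpos.le⟩
  exact ⟨T, hT, hT0⟩

theorem StrictConvexOn.exists_unique_deriv_eq_zero (hf : StrictConvexOn ℝ (Ioi a) f)
    (hd : ∀ x ∈ Ioi a, DifferentiableAt ℝ f x) (h0 : Tendsto f (𝓝[>] a) atTop)
    (htop : Tendsto f atTop atTop) :
    ∃ T, a < T ∧ deriv f T = 0 ∧ (∀ T', a < T' → deriv f T' = 0 → T' = T) ∧
      StrictAntiOn f (Ioo a T) ∧ StrictMonoOn f (Ioi T) := by
  obtain ⟨T, hT, hT0⟩ := hf.exists_deriv_eq_zero hd h0 htop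
  refine ⟨T, hT, hT0, fun T' hT' hT'0 => ?_, ?_, ?_⟩
  · exact (hf.strictMonoOn_deriv hd).injOn hT' hT (hT'0.trans hT0.symm)
  · exact (hf.strictAntiOn_of_deriv_eq_zero hd hT hT0).mono fun x hx => ⟨hx.1, hx.2.le⟩
  · exact (hf.strictMonoOn_of_deriv_eq_zero hd hT hT0).mono
      fun x hx => ⟨hT.trans (mem_Ioi.1 hx), (mem_Ioi.1 hx).le⟩

end CriticalPoint

-- The paper's `E_i(t)` is `perspective (clusterPower m a c b P^C) t` with `c_j = σ²/(η g_j)`.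
noncomputable def clusterPower (m : ℕ) (a c : ℕ → ℝ) (b : ℕ → ℕ → ℝ) (PC u : ℝ) : ℝ :=
  ∑ j ∈ Finset.Icc 1 m, (c j * ((∑ l ∈ Finset.Icc (j + 1) m,
    (exp (a l * u) - 1) * (exp (a j * u) - 1) * exp (b j l * u)) + (exp (a j * u) - 1)) + PC)

section ClusterPower

variable {m : ℕ} {a c : ℕ → ℝ} {b : ℕ → ℕ → ℝ} {PC : ℝ}

theorem differentiable_clusterPower : Differentiable ℝ (clusterPower m a c b PC) := by
  unfold clusterPower
  fun_prop

theorem strictConvexOn_clusterPower (hm : 1 ≤ m) (ha : ∀ j ∈ Finset.Icc 1 m, 0 < a j)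
    (hb : ∀ j ∈ Finset.Icc 1 m, ∀ l ∈ Finset.Icc (j + 1) m, 0 ≤ b j l)
    (hc : ∀ j ∈ Finset.Icc 1 m, 0 < c j) : StrictConvexOn ℝ (Ici 0) (clusterPower m a c b PC) := by
  refine StrictConvexOn.fun_sum (Finset.nonempty_Icc.2 hm) fun j hj => ?_
  have hinterference := ConvexOn.fun_sum (convex_Ici 0) fun l hl =>
    convexOn_exp_sub_one_mul_exp_sub_one_mul_exp (ha l (Finset.Icc_subset_Icc_left
      (Nat.le_add_left 1 j) hl)).le (ha j hj).le (hb j hj l hl)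
  have hown := ((strictConvexOn_exp_mul (ha j hj).ne').subset (subset_univ _)
    (convex_Ici 0)).sub_concaveOn (concaveOn_const 1 (convex_Ici 0))
  exact ((hinterference.add_strictConvexOn hown).const_mul (hc j hj)).add_const PC

theorem mul_sq_add_le_clusterPower (hm : 1 ≤ m) (ha : ∀ j ∈ Finset.Icc 1 m, 0 < a j)
    (hc : ∀ j ∈ Finset.Icc 1 m, 0 < c j) (hPC : 0 ≤ PC) {u : ℝ} (hu : 0 ≤ u) :
    c 1 * (a 1 ^ 2 / 2) * u ^ 2 + PC ≤ clusterPower m a c b PC u := by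
  have hexp {x : ℝ} (hx : 0 ≤ x) : 0 ≤ exp (x * u) - 1 :=
    sub_nonneg.2 (one_le_exp (mul_nonneg hx hu))
  have hinterference (j : ℕ) (hj : j ∈ Finset.Icc 1 m) : 0 ≤ ∑ l ∈ Finset.Icc (j + 1) m,
      (exp (a l * u) - 1) * (exp (a j * u) - 1) * exp (b j l * u) :=
    Finset.sum_nonneg fun l hl => mul_nonneg (mul_nonneg (hexp (ha l (Finset.Icc_subset_Icc_left
      (Nat.le_add_left 1 j) hl)).le) (hexp (ha j hj).le)) (exp_pos _).le
  have h1 : 1 ∈ Finset.Icc 1 m := Finset.mem_Icc.2 ⟨le_rfl, hm⟩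
  unfold clusterPower
  refine le_trans ?_ (Finset.single_le_sum (fun j hj => add_nonneg (mul_nonneg (hc j hj).le
    (add_nonneg (hinterference j hj) (hexp (ha j hj).le))) hPC) h1)
  have hquad : a 1 ^ 2 / 2 * u ^ 2 ≤ exp (a 1 * u) - 1 := by
    nlinarith [quadratic_le_exp_of_nonneg (mul_nonneg (ha 1 h1).le hu), (ha 1 h1).le]
  have := hinterference 1 h1
  rw [mul_assoc]
  gcongr
  · exact (hc 1 h1).le
  · linarith

theorem strictConvexOn_perspective_clusterPower (hm : 1 ≤ m) (ha : ∀ j ∈ Finset.Icc 1 m, 0 < a j)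
    (hb : ∀ j ∈ Finset.Icc 1 m, ∀ l ∈ Finset.Icc (j + 1) m, 0 ≤ b j l)
    (hc : ∀ j ∈ Finset.Icc 1 m, 0 < c j) :
    StrictConvexOn ℝ (Ioi 0) (perspective (clusterPower m a c b PC)) :=
  ((strictConvexOn_clusterPower hm ha hb hc).subset Ioi_subset_Ici_self (convex_Ioi 0)).perspective

theorem exists_unique_deriv_perspective_clusterPower_eq_zero (hm : 1 ≤ m)
    (ha : ∀ j ∈ Finset.Icc 1 m, 0 < a j)
    (hb : ∀ j ∈ Finset.Icc 1 m, ∀ l ∈ Finset.Icc (j + 1) m, 0 ≤ b j l)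
    (hc : ∀ j ∈ Finset.Icc 1 m, 0 < c j) (hPC : 0 < PC) :
    ∃ T, 0 < T ∧ deriv (perspective (clusterPower m a c b PC)) T = 0 ∧
      (∀ T', 0 < T' → deriv (perspective (clusterPower m a c b PC)) T' = 0 → T' = T) ∧
      StrictAntiOn (perspective (clusterPower m a c b PC)) (Ioo 0 T) ∧
      StrictMonoOn (perspective (clusterPower m a c b PC)) (Ioi T) := by
  have hbound {u : ℝ} (hu : 0 < u) := mul_sq_add_le_clusterPower (b := b) hm ha hc hPC.le hu.le
  have h1 : 1 ∈ Finset.Icc 1 m := Finset.mem_Icc.2 ⟨le_rfl, hm⟩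
  have hK : 0 < c 1 * (a 1 ^ 2 / 2) := mul_pos (hc 1 h1) (by have := ha 1 h1; positivity)
  refine (strictConvexOn_perspective_clusterPower hm ha hb hc).exists_unique_deriv_eq_zero
    (fun t ht => differentiable_clusterPower.differentiableAt.perspective (ne_of_gt ht)) ?_ ?_
  · exact tendsto_perspective_nhdsGT_zero hK fun u hu =>
      (le_add_of_nonneg_right hPC.le).trans (hbound hu)
  · exact tendsto_perspective_atTop hPC fun u hu =>
      (le_add_of_nonneg_left (by positivity)).trans (hbound hu)

end ClusterPower

theorem stmt_17_general (m : ℕ) (hm : 1 ≤ m)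
    (g : ℕ → ℝ) (hg : ∀ l, 1 ≤ l → l ≤ m → 0 < g l)
    (D : ℕ → ℝ) (hD : ∀ l, 1 ≤ l → l ≤ m → 0 < D l)
    (B σ2 η PC : ℝ) (hB : 0 < B) (hσ2 : 0 < σ2)
    (hη0 : 0 < η) (hPC : 0 < PC)
    (a : ℕ → ℝ) (ha : ∀ l, a l = Real.log 2 * D l / B)
    (b : ℕ → ℕ → ℝ)
    (hb : ∀ j l, b j l = Real.log 2 * (∑ s ∈ Finset.Ico (j + 1) l, D s) / B)
    (E : ℕ → ℝ → ℝ)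
    (hEj : ∀ j, ∀ t : ℝ, E j t =
      σ2 * t / (η * g j) *
        ((∑ l ∈ Finset.Icc (j + 1) m,
            (Real.exp (a l / t) - 1) * (Real.exp (a j / t) - 1) * Real.exp (b j l / t))
          + (Real.exp (a j / t) - 1)) + t * PC)
    (Ei : ℝ → ℝ) (hEi : ∀ t : ℝ, Ei t = ∑ j ∈ Finset.Icc 1 m, E j t) :
    ConvexOn ℝ (Set.Ioi (0 : ℝ)) Ei ∧
    ∃ T : ℝ, 0 < T ∧ deriv Ei T = 0 ∧
      (∀ T' : ℝ, 0 < T' → deriv Ei T' = 0 → T' = T) ∧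
      StrictAntiOn Ei (Set.Ioo 0 T) ∧ StrictMonoOn Ei (Set.Ioi T) := by
  set c : ℕ → ℝ := fun j => σ2 / (η * g j)
  have hEi_eq : Ei = perspective (clusterPower m a c b PC) := by
    funext t
    rw [hEi, perspective, clusterPower, Finset.mul_sum]
    refine Finset.sum_congr rfl fun j _ => ?_
    rw [hEj]
    simp only [c, div_eq_mul_inv]
    ring
  have hlog : 0 < Real.log 2 / B := div_pos (Real.log_pos one_lt_two) hB
  have ha' (j : ℕ) (hj : j ∈ Finset.Icc 1 m) : 0 < a j := by
    rw [Finset.mem_Icc] at hj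
    rw [ha, mul_div_right_comm]
    exact mul_pos hlog (hD j hj.1 hj.2)
  have hb' (j : ℕ) (hj : j ∈ Finset.Icc 1 m) (l : ℕ) (hl : l ∈ Finset.Icc (j + 1) m) :
      0 ≤ b j l := by
    rw [Finset.mem_Icc] at hj hl
    rw [hb, mul_div_right_comm]
    refine mul_nonneg hlog.le (Finset.sum_nonneg fun s hs => ?_)
    rw [Finset.mem_Ico] at hs
    exact (hD s (by omega) (by omega)).le
  have hc (j : ℕ) (hj : j ∈ Finset.Icc 1 m) : 0 < c j := by
    rw [Finset.mem_Icc] at hj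
    exact div_pos hσ2 (mul_pos hη0 (hg j hj.1 hj.2))
  rw [hEi_eq]
  exact ⟨(strictConvexOn_perspective_clusterPower hm ha' hb' hc).convexOn,
    exists_unique_deriv_perspective_clusterPower_eq_zero hm ha' hb' hc hPC⟩

/-- Lemma 5 of the paper: the total cluster energy `E_i(t) = Σ_{j=1}^{m} E_j(t)`, where
each `E_j` is the NOMA per-device energy with common transmission time `t` and circuit
power `P^C > 0`, is convex on `(0, ∞)`, has a unique critical point `T_i* > 0`, and is
strictly decreasing on `(0, T_i*)` and strictly increasing on `(T_i*, ∞)`. -/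
theorem stmt_17 (m : ℕ) (hm : 1 ≤ m)
    (g : ℕ → ℝ) (hg : ∀ l, 1 ≤ l → l ≤ m → 0 < g l)
    (D : ℕ → ℝ) (hD : ∀ l, 1 ≤ l → l ≤ m → 0 < D l)
    (B σ2 η PC : ℝ) (hB : 0 < B) (hσ2 : 0 < σ2)
    (hη0 : 0 < η) (hη1 : η ≤ 1) (hPC : 0 < PC)
    (a : ℕ → ℝ) (ha : ∀ l, a l = Real.log 2 * D l / B)
    (b : ℕ → ℕ → ℝ)
    (hb : ∀ j l, b j l = Real.log 2 * (∑ s ∈ Finset.Ico (j + 1) l, D s) / B)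
    (E : ℕ → ℝ → ℝ)
    (hEj : ∀ j, ∀ t : ℝ, E j t =
      σ2 * t / (η * g j) *
        ((∑ l ∈ Finset.Icc (j + 1) m,
            (Real.exp (a l / t) - 1) * (Real.exp (a j / t) - 1) * Real.exp (b j l / t))
          + (Real.exp (a j / t) - 1)) + t * PC)
    (Ei : ℝ → ℝ) (hEi : ∀ t : ℝ, Ei t = ∑ j ∈ Finset.Icc 1 m, E j t) :
    ConvexOn ℝ (Set.Ioi (0 : ℝ)) Ei ∧
    ∃ T : ℝ, 0 < T ∧ deriv Ei T = 0 ∧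
      (∀ T' : ℝ, 0 < T' → deriv Ei T' = 0 → T' = T) ∧
      StrictAntiOn Ei (Set.Ioo 0 T) ∧ StrictMonoOn Ei (Set.Ioi T) :=
  stmt_17_general m hm g hg D hD B σ2 η PC hB hσ2 hη0 hPC a ha b hb E hEj Ei hEi
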